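/- Let G be a profinite group and N the kernel of the canonical projection G → G(p) onto its maximal pro-p quotient. Then H¹(N, ℤ/q)^G = 0, i.e., every G-invariant continuous homomorphism N → ℤ/q is trivial; consequently the inflation map H²(G(p), ℤ/q) → H²(G, ℤ/q) is injective. -/

import Mathlib

/-!
A continuous `G`-invariant homomorphism `φ : N → ℤ/q` has a kernel `K` that is normal in `G` and
open in `N`, so `M = K W` is open and normal in `G` for an open normal `W` with `W ∩ N ⊆ K`.
Its index `[G : M] = [G : N M] [N : N ∩ M]` is a power of `p`: the first factor is an index in the
pro-`p` group `G(p)`, the second divides `q`. Hence `G → G/M` factors through `G(p)`, so `N ⊆ M`,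
and `N ∩ M = K (N ∩ W) = K` forces `φ = 0`.

If the inflation of a 2-cocycle `f` is `δb`, then `b - f(1, 1)` restricted to `N` is such a
`G`-invariant homomorphism, hence zero; so `b` is constant on the cosets of `N` and descends to a
continuous cochain `b'` on `G(p)` with `f = δb'`.
-/

/-- A degree-`m` continuous inhomogeneous cochain on `G` with values in the
(discrete) trivial module `ℤ/q`. -/
def IsCochain (q : ℕ) (G : Type*) [TopologicalSpace G] (m : ℕ)
    (f : (Fin m → G) → ZMod q) : Prop :=
  @Continuous (Fin m → G) (ZMod q) _ ⊥ f

/-- The `i`-th "multiply adjacent entries" face map used in the inhomogeneous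
differential: `(g₁, …, g_{m+1}) ↦ (g₁, …, g_i g_{i+1}, …, g_{m+1})`
(0-indexed at position `i`). -/
def mulFace {G : Type*} [Group G] {m : ℕ} (i : ℕ) (g : Fin (m + 1) → G) : Fin m → G :=
  fun j => if (j : ℕ) < i then g j.castSucc
    else if (j : ℕ) = i then g j.castSucc * g j.succ
    else g j.succ

/-- The inhomogeneous differential `δ : Cᵐ(G, ℤ/q) → Cᵐ⁺¹(G, ℤ/q)` for the
trivial action:
`(δf)(g₁,…,g_{m+1}) = f(g₂,…,g_{m+1}) + ∑_{i=1}^{m} (-1)^i f(g₁,…,g_i g_{i+1},…,g_{m+1}) + (-1)^{m+1} f(g₁,…,g_m)`. -/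
def cochainD (q : ℕ) {G : Type*} [Group G] (m : ℕ) (f : (Fin m → G) → ZMod q) :
    (Fin (m + 1) → G) → ZMod q :=
  fun g => f (fun j => g j.succ)
    + (Finset.range m).sum (fun i => (-1 : ZMod q) ^ (i + 1) * f (mulFace i g))
    + (-1 : ZMod q) ^ (m + 1) * f (fun j => g j.castSucc)

/-- `H^{m+1}(G, ℤ/q) = 0`: every continuous `(m+1)`-cocycle is the coboundary
of a continuous `m`-cochain. -/
def HTrivialSucc (q : ℕ) (G : Type*) [Group G] [TopologicalSpace G] (m : ℕ) : Prop :=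
  ∀ f : (Fin (m + 1) → G) → ZMod q, IsCochain q G (m + 1) f →
    (∀ g : Fin (m + 2) → G, cochainD q (m + 1) f g = 0) →
    ∃ h : (Fin m → G) → ZMod q, IsCochain q G m h ∧ f = cochainD q m h

/-- A profinite group is pro-`p` if every open normal subgroup has `p`-power index. -/
def IsProP (p : ℕ) (G : Type*) [Group G] [TopologicalSpace G] : Prop :=
  ∀ U : Subgroup G, U.Normal → IsOpen (U : Set G) → ∃ n : ℕ, U.index = p ^ n


section Profinite

variable {G : Type*} [Group G] [TopologicalSpace G] [IsTopologicalGroup G] [CompactSpace G]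
  [TotallyDisconnectedSpace G]

theorem exists_openNormalSubgroup_subgroupOf_le {N : Subgroup G} {K : Subgroup N}
    (hK : IsOpen (K : Set N)) : ∃ W : OpenNormalSubgroup G, W.toSubgroup.subgroupOf N ≤ K := by
  obtain ⟨V, hV, hVK⟩ := isOpen_induced_iff.mp hK
  have h1V : (1 : G) ∈ V := show (1 : N) ∈ Subtype.val ⁻¹' V from hVK ▸ K.one_mem
  obtain ⟨W, hWV⟩ := ProfiniteGrp.exist_openNormalSubgroup_sub_open_nhds_of_one hV h1V
  exact ⟨W, fun x hx => by rw [← SetLike.mem_coe, ← hVK]; exact hWV hx⟩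

theorem exists_openNormalSubgroup_relIndex_dvd_of_conj_invariant
    {A : Type*} [Group A] [TopologicalSpace A] [DiscreteTopology A]
    {N : Subgroup G} [N.Normal] (φ : N →* A) (hφ : Continuous φ)
    (hinv : ∀ (g : G) (r : N) (h : g * r * g⁻¹ ∈ N), φ ⟨g * r * g⁻¹, h⟩ = φ r) :
    ∃ M : OpenNormalSubgroup G, M.toSubgroup.relIndex N ∣ Nat.card A ∧
      ∀ r : N, (r : G) ∈ M → φ r = 1 := by
  let K : Subgroup G := φ.ker.map N.subtype
  have hK : K.Normal := ⟨by
    rintro _ ⟨r, hr, rfl⟩ g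
    have h := (inferInstance : N.Normal).conj_mem _ r.2 g
    exact ⟨⟨_, h⟩, (hinv g r h).trans hr, rfl⟩⟩
  obtain ⟨W, hW⟩ := exists_openNormalSubgroup_subgroupOf_le (K := φ.ker)
    (by rw [MonoidHom.coe_ker]; exact hφ.isOpen_preimage {1} (isOpen_discrete _))
  refine ⟨⟨⟨K ⊔ W.toSubgroup, Subgroup.isOpen_mono le_sup_right W.isOpen⟩,
    Subgroup.sup_normal _ _⟩, ?_, ?_⟩
  · have hKN : K.subgroupOf N = φ.ker :=
      Subgroup.comap_map_eq_self_of_injective N.subtype_injective _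
    calc (K ⊔ W.toSubgroup).relIndex N ∣ K.relIndex N :=
          Subgroup.relIndex_dvd_of_le_left _ le_sup_left
      _ = Nat.card φ.range := by rw [Subgroup.relIndex, hKN, Subgroup.index_ker]
      _ ∣ Nat.card A := Subgroup.card_subgroup_dvd_card _
  · rintro r hr
    obtain ⟨_, ⟨k, hk, rfl⟩, w, hw, hkw⟩ := Subgroup.mem_sup_of_normal_right.mp hr
    have hwN : w ∈ N := by
      rw [eq_inv_mul_of_mul_eq hkw]
      exact N.mul_mem (N.inv_mem k.2) r.2
    have hr : r = k * ⟨w, hwN⟩ := Subtype.ext hkw.symm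
    rw [hr, map_mul, hk, hW (show (⟨w, hwN⟩ : N) ∈ W.toSubgroup.subgroupOf N from hw), one_mul]

end Profinite

def IsProPUniversal (p : ℕ) {G Q : Type*} [Group G] [TopologicalSpace G] [Group Q]
    [TopologicalSpace Q] (π : G →* Q) : Prop :=
  ∀ (H : Type) (_ : Group H) (_ : TopologicalSpace H) (_ : IsTopologicalGroup H)
    (_ : CompactSpace H) (_ : T2Space H) (_ : TotallyDisconnectedSpace H),
    IsProP p H → ∀ f : G →* H, Continuous f → ∃ fbar : Q →* H, Continuous fbar ∧ fbar.comp π = f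

theorem isProP_of_card_eq_prime_pow {p n : ℕ} (hp : p.Prime) {H : Type*} [Group H]
    [TopologicalSpace H] (hH : Nat.card H = p ^ n) : IsProP p H := fun U _ _ => by
  obtain ⟨k, -, hk⟩ := (Nat.dvd_prime_pow hp).mp (hH ▸ U.index_dvd_card)
  exact ⟨k, hk⟩

section MaximalProPQuotient

open Topology

variable {p : ℕ} {G Q : Type*} [Group G] [TopologicalSpace G] [IsTopologicalGroup G]
  [Group Q] [TopologicalSpace Q] {π : G →* Q}

theorem ker_le_of_index_eq_prime_pow [CompactSpace G] (hp : p.Prime)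
    (huniv : IsProPUniversal p π) {M : Subgroup G} [M.Normal] (hM : IsOpen (M : Set G)) {n : ℕ}
    (hidx : M.index = p ^ n) : π.ker ≤ M := by
  have : Finite (G ⧸ M) := Subgroup.quotient_finite_of_isOpen M hM
  have : DiscreteTopology (G ⧸ M) := QuotientGroup.discreteTopology hM
  let H : Type := Shrink.{0} (G ⧸ M)
  let e : H ≃* G ⧸ M := Shrink.mulEquiv
  let _ : TopologicalSpace H := ⊥
  have : DiscreteTopology H := ⟨rfl⟩
  have : Finite H := Finite.of_equiv _ e.toEquiv.symm
  have : IsTopologicalGroup H := {}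
  let f : G →* H := e.symm.toMonoidHom.comp (QuotientGroup.mk' M)
  have hf : Continuous f :=
    (continuous_of_discreteTopology : Continuous e.symm).comp continuous_quot_mk
  have hH : IsProP p H :=
    isProP_of_card_eq_prime_pow hp (by rw [Nat.card_congr e.toEquiv, ← hidx]; rfl)
  obtain ⟨fbar, -, hfbar⟩ :=
    huniv H _ _ inferInstance inferInstance inferInstance inferInstance hH f hf
  intro x hx
  have hfx : f x = 1 := by rw [← hfbar, MonoidHom.comp_apply, hx, map_one]
  simpa [f] using hfx

theorem index_eq_prime_pow_of_relIndex_ker (hQ : IsProP p Q) (hπ : IsQuotientMap π)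
    {M : Subgroup G} [M.Normal] (hM : IsOpen (M : Set G)) {k : ℕ}
    (hk : M.relIndex π.ker = p ^ k) : ∃ n, M.index = p ^ n := by
  set L := π.ker ⊔ M
  have hL : (L.map π).comap π = L := by rw [Subgroup.comap_map_eq, sup_eq_left.mpr le_sup_left]
  have : (L.map π).Normal := (Subgroup.sup_normal _ _).map π hπ.surjective
  have hLopen : IsOpen (L.map π : Set Q) := by
    rw [← hπ.isOpen_preimage, ← Subgroup.coe_comap, hL]
    exact Subgroup.isOpen_mono le_sup_right hM
  obtain ⟨m, hm⟩ := hQ _ this hLopen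
  refine ⟨k + m, ?_⟩
  rw [← Subgroup.relIndex_mul_index (le_sup_right : M ≤ L), Subgroup.relIndex_sup_right, hk,
    pow_add, ← hm, ← Subgroup.index_comap_of_surjective _ hπ.surjective, hL]

theorem ker_hom_eq_one_of_conj_invariant [CompactSpace G] [TotallyDisconnectedSpace G]
    (hp : p.Prime) (hQ : IsProP p Q) (hπ : IsQuotientMap π)
    (huniv : IsProPUniversal p π) {A : Type*} [Group A] [TopologicalSpace A] [DiscreteTopology A]
    {d : ℕ} (hA : Nat.card A = p ^ d) (φ : π.ker →* A) (hφ : Continuous φ)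
    (hinv : ∀ (g : G) (r : π.ker) (h : g * r * g⁻¹ ∈ π.ker), φ ⟨g * r * g⁻¹, h⟩ = φ r)
    (r : π.ker) : φ r = 1 := by
  obtain ⟨M, hMA, hM⟩ := exists_openNormalSubgroup_relIndex_dvd_of_conj_invariant φ hφ hinv
  obtain ⟨k, -, hk⟩ := (Nat.dvd_prime_pow hp).mp (hA ▸ hMA)
  obtain ⟨n, hn⟩ := index_eq_prime_pow_of_relIndex_ker hQ hπ M.isOpen hk
  exact hM r (ker_le_of_index_eq_prime_pow hp huniv M.isOpen hn r.2)

end MaximalProPQuotient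

section Inflation

variable {q : ℕ} {G Q : Type*} [Group G] [Group Q]

theorem cochainD_one_apply (b : (Fin 1 → G) → ZMod q) (g : Fin 2 → G) :
    cochainD q 1 b g = b (fun _ => g 1) - b (fun _ => g 0 * g 1) + b (fun _ => g 0) := by
  have h₁ : (fun j : Fin 1 => g j.succ) = fun _ => g 1 := funext fun j => by
    rw [Fin.fin_one_eq_zero j]; rfl
  have h₂ : (fun j : Fin 1 => g j.castSucc) = fun _ => g 0 := funext fun j => by
    rw [Fin.fin_one_eq_zero j]; rfl
  have h₃ : mulFace 0 g = fun _ => g 0 * g 1 := funext fun j => by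
    rw [Fin.fin_one_eq_zero j]; rfl
  simp only [cochainD, Finset.sum_range_one, h₁, h₂, h₃]
  ring

theorem cochainD_two_apply (f : (Fin 2 → G) → ZMod q) (g : Fin 3 → G) :
    cochainD q 2 f g =
      f ![g 1, g 2] - f ![g 0 * g 1, g 2] + f ![g 0, g 1 * g 2] - f ![g 0, g 1] := by
  have h₁ : (fun j : Fin 2 => g j.succ) = ![g 1, g 2] := by ext j; fin_cases j <;> rfl
  have h₂ : (fun j : Fin 2 => g j.castSucc) = ![g 0, g 1] := by ext j; fin_cases j <;> rfl
  have h₃ : mulFace 0 g = ![g 0 * g 1, g 2] := by ext j; fin_cases j <;> rfl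
  have h₄ : mulFace 1 g = ![g 0, g 1 * g 2] := by ext j; fin_cases j <;> rfl
  simp only [cochainD, Finset.sum_range_succ, Finset.sum_range_zero, h₁, h₂, h₃, h₄]
  ring

variable {f : (Fin 2 → Q) → ZMod q}

theorem cocycle_apply_one_left (hf : ∀ g, cochainD q 2 f g = 0) (x : Q) :
    f ![1, x] = f ![1, 1] := by
  have h := hf ![1, 1, x]
  simp only [cochainD_two_apply, Matrix.cons_val_zero, Matrix.cons_val_one, Matrix.cons_val,
    one_mul, mul_one] at h
  linear_combination h

theorem cocycle_apply_one_right (hf : ∀ g, cochainD q 2 f g = 0) (x : Q) :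
    f ![x, 1] = f ![1, 1] := by
  have h := hf ![x, 1, 1]
  simp only [cochainD_two_apply, Matrix.cons_val_zero, Matrix.cons_val_one, Matrix.cons_val,
    mul_one] at h
  linear_combination -h

theorem inflation_apply_of_eq_cochainD {π : G →* Q} {b : (Fin 1 → G) → ZMod q}
    (hb : (fun v : Fin 2 → G => f (fun i => π (v i))) = cochainD q 1 b) (x y : G) :
    f ![π x, π y] = b (fun _ => y) - b (fun _ => x * y) + b (fun _ => x) := by
  have h := congrFun hb ![x, y]
  have hv : (fun i => π (![x, y] i)) = ![π x, π y] := by ext i; fin_cases i <;> rfl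
  rwa [cochainD_one_apply, hv] at h

variable {π : G →* Q} {B : G → ZMod q}

theorem apply_one_of_inflation_eq (hB : ∀ x y, f ![π x, π y] = B y - B (x * y) + B x) :
    B 1 = f ![1, 1] := by
  simpa using (hB 1 1).symm

def kerHomOfInflationEq (hB : ∀ x y, f ![π x, π y] = B y - B (x * y) + B x) :
    π.ker →* Multiplicative (ZMod q) where
  toFun r := .ofAdd (B r - f ![1, 1])
  map_one' := by simp [apply_one_of_inflation_eq hB]
  map_mul' r s := by
    have h := hB r s
    rw [r.2, s.2] at h
    rw [← ofAdd_add, Subgroup.coe_mul]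
    congr 1
    linear_combination h

theorem kerHomOfInflationEq_conj (hf : ∀ g, cochainD q 2 f g = 0)
    (hB : ∀ x y, f ![π x, π y] = B y - B (x * y) + B x) (g : G) (r : π.ker)
    (h : g * r * g⁻¹ ∈ π.ker) :
    kerHomOfInflationEq hB ⟨g * r * g⁻¹, h⟩ = kerHomOfInflationEq hB r := by
  have hg := hB g (r * g⁻¹)
  have hr := hB r g⁻¹
  have hgg := hB g g⁻¹
  rw [r.2, cocycle_apply_one_left hf] at hr
  rw [mul_inv_cancel, apply_one_of_inflation_eq hB] at hgg
  rw [map_mul, r.2, one_mul, ← mul_assoc] at hg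
  simp only [kerHomOfInflationEq, MonoidHom.coe_mk, OneHom.coe_mk]
  congr 1
  linear_combination hg - hgg + hr

theorem continuous_kerHomOfInflationEq [TopologicalSpace G]
    (hB : ∀ x y, f ![π x, π y] = B y - B (x * y) + B x) (hBc : Continuous B) :
    Continuous (kerHomOfInflationEq hB) := by
  have hofAdd : Continuous fun x : ZMod q => Multiplicative.ofAdd (x - f ![1, 1]) :=
    continuous_of_discreteTopology
  exact hofAdd.comp (hBc.comp continuous_subtype_val)

theorem apply_eq_of_kerHomOfInflationEq_eq_one (hf : ∀ g, cochainD q 2 f g = 0)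
    (hB : ∀ x y, f ![π x, π y] = B y - B (x * y) + B x) (h : ∀ r, kerHomOfInflationEq hB r = 1)
    {x y : G} (hxy : π x = π y) : B x = B y := by
  have hn : π (x⁻¹ * y) = 1 := by rw [map_mul, map_inv, hxy, inv_mul_cancel]
  have hBn : B (x⁻¹ * y) = f ![1, 1] := sub_eq_zero.mp (ofAdd_eq_one.mp (h ⟨_, hn⟩))
  have hxn := hB x (x⁻¹ * y)
  rw [hn, cocycle_apply_one_right hf, mul_inv_cancel_left, hBn] at hxn
  linear_combination -hxn

open Topology in
theorem exists_isCochain_eq_cochainD_of_inflation_eq [TopologicalSpace G] [TopologicalSpace Q]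
    (hπ : IsQuotientMap π) (hB : ∀ x y, f ![π x, π y] = B y - B (x * y) + B x)
    (hBc : Continuous B) (hfib : ∀ x y, π x = π y → B x = B y) :
    ∃ b : (Fin 1 → Q) → ZMod q, IsCochain q Q 1 b ∧ f = cochainD q 1 b := by
  let s := Function.surjInv hπ.surjective
  have hs : ∀ y, π (s y) = y := Function.surjInv_eq hπ.surjective
  have hBs : ∀ x, B (s (π x)) = B x := fun x => hfib _ _ (hs _)
  refine ⟨fun v => B (s (v 0)), ?_, ?_⟩
  · have : Continuous (B ∘ s) := hπ.continuous_iff.mpr (by simpa [Function.comp_def, hBs] using hBc)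
    exact this.comp (continuous_apply 0)
  · ext w
    obtain ⟨x, hx⟩ := hπ.surjective (w 0)
    obtain ⟨y, hy⟩ := hπ.surjective (w 1)
    have hw : w = ![π x, π y] := by ext i; fin_cases i <;> simp [hx, hy]
    subst hw
    rw [cochainD_one_apply, hB]
    simp [← map_mul, hBs]

end Inflation

theorem H1_ker_trivial_and_inflation_injective
    {G : Type*} [Group G] [TopologicalSpace G] [IsTopologicalGroup G]
    [CompactSpace G] [TotallyDisconnectedSpace G]
    {Q : Type*} [Group Q] [TopologicalSpace Q] [T2Space Q]
    (p d q : ℕ) (hp : p.Prime) (hq : q = p ^ d)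
    (hQ : IsProP p Q) (π : G →* Q) (hπcont : Continuous π) (hπsurj : Function.Surjective π)
    (huniv : ∀ (H : Type) (_ : Group H) (_ : TopologicalSpace H) (_ : IsTopologicalGroup H)
      (_ : CompactSpace H) (_ : T2Space H) (_ : TotallyDisconnectedSpace H),
      IsProP p H → ∀ f : G →* H, Continuous f →
        ∃ fbar : Q →* H, Continuous fbar ∧ fbar.comp π = f) :
    -- (1) every G-invariant continuous homomorphism N → ℤ/q is trivial
    ((∀ φ : ↥π.ker →* Multiplicative (ZMod q),
      (@Continuous ↥π.ker (Multiplicative (ZMod q)) _ ⊥ φ) →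
      (∀ (g : G) (r : ↥π.ker) (h : g * ↑r * g⁻¹ ∈ π.ker), φ ⟨g * ↑r * g⁻¹, h⟩ = φ r) →
      ∀ r : ↥π.ker, φ r = 1) ∧
    -- (2) inflation H²(G(p), ℤ/q) → H²(G, ℤ/q) is injective
    (∀ f : (Fin 2 → Q) → ZMod q, IsCochain q Q 2 f →
      (∀ g : Fin 3 → Q, cochainD q 2 f g = 0) →
      (∃ b : (Fin 1 → G) → ZMod q, IsCochain q G 1 b ∧
        (fun v : Fin 2 → G => f (fun i => π (v i))) = cochainD q 1 b) →
      ∃ b' : (Fin 1 → Q) → ZMod q, IsCochain q Q 1 b' ∧ f = cochainD q 1 b')) := by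
  have hπ : Topology.IsQuotientMap π := hπcont.isClosedMap.isQuotientMap hπcont hπsurj
  have hcard : Nat.card (Multiplicative (ZMod q)) = p ^ d := hq ▸ Nat.card_zmod q
  have hH1 := fun φ hφ hinv r => ker_hom_eq_one_of_conj_invariant hp hQ hπ huniv hcard φ hφ hinv r
  refine ⟨hH1, ?_⟩
  rintro f - hf ⟨b, hbc, hb⟩
  set B : G → ZMod q := fun g => b fun _ => g
  have hB : ∀ x y, f ![π x, π y] = B y - B (x * y) + B x := inflation_apply_of_eq_cochainD hb
  have hBc : Continuous B := hbc.comp (continuous_pi fun _ => continuous_id)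
  exact exists_isCochain_eq_cochainD_of_inflation_eq hπ hB hBc fun x y =>
    apply_eq_of_kerHomOfInflationEq_eq_one hf hB
      (hH1 _ (continuous_kerHomOfInflationEq hB hBc) (kerHomOfInflationEq_conj hf hB))
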